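/- arXiv:1103.5610 — 3 statements merged into one kernel-verified Lean document; each statement's English description precedes it below -/
import Mathlib

section
/- Let r(s) = c·((1-α)·c·s + 1)^{α/(1-α)} with c ≥ 1 and 0 ≤ α < 1. Then r(t+s) ≤ r(t)·r(s) for all t, s ≥ 0. -/
open Real

theorem add_add_one_le_add_one_mul_add_one {x y : ℝ} (hx : 0 ≤ x) (hy : 0 ≤ y) :
    x + y + 1 ≤ (x + 1) * (y + 1) := by
  nlinarith [mul_nonneg hx hy]

theorem affine_rpow_add_le {a p t s : ℝ} (ha : 0 ≤ a) (hp : 0 ≤ p) (ht : 0 ≤ t) (hs : 0 ≤ s) :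
    (a * (t + s) + 1) ^ p ≤ (a * t + 1) ^ p * (a * s + 1) ^ p := by
  have hat : 0 ≤ a * t := mul_nonneg ha ht
  have has : 0 ≤ a * s := mul_nonneg ha hs
  rw [← mul_rpow (by linarith) (by linarith), mul_add]
  exact rpow_le_rpow (by linarith) (add_add_one_le_add_one_mul_add_one hat has) hp

theorem mul_le_mul_mul_of_one_le {c u v w : ℝ} (hc : 1 ≤ c) (hv : 0 ≤ v) (hw : 0 ≤ w)
    (h : u ≤ v * w) : c * u ≤ c * v * (c * w) :=
  calc c * u ≤ c * (v * w) := mul_le_mul_of_nonneg_left h (by linarith)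
    _ ≤ c * c * (v * w) :=
      mul_le_mul_of_nonneg_right (le_mul_of_one_le_left (by linarith) hc) (mul_nonneg hv hw)
    _ = c * v * (c * w) := by ring

/-- For r(s) = c·((1-α)·c·s + 1)^{α/(1-α)} with c ≥ 1 and
0 ≤ α < 1, one has r(t+s) ≤ r(t)·r(s) for all t, s ≥ 0. -/
theorem stmt2 (c α : ℝ) (hc : 1 ≤ c) (hα0 : 0 ≤ α) (hα1 : α < 1)
    (r : ℝ → ℝ) (hr : ∀ s, r s = c * ((1 - α) * c * s + 1) ^ (α / (1 - α))) :
    ∀ t s : ℝ, 0 ≤ t → 0 ≤ s → r (t + s) ≤ r t * r s := by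
  intro t s ht hs
  have ha : 0 ≤ (1 - α) * c := mul_nonneg (sub_nonneg.2 hα1.le) (by linarith)
  rw [hr, hr, hr]
  exact mul_le_mul_mul_of_one_le hc
    (rpow_nonneg (by nlinarith [mul_nonneg ha ht]) _)
    (rpow_nonneg (by nlinarith [mul_nonneg ha hs]) _)
    (affine_rpow_add_le ha (div_nonneg hα0 (sub_nonneg.2 hα1.le)) ht hs)
end

section
/- Let f : ℝ^d → ℝ, x, h ∈ ℝ^d with f(y) = ‖y‖^m (m ≥ 1) twice differentiable away from 0, and suppose ‖h‖ ≤ γ‖x‖^l with l < 1 and ‖x‖ ≥ M₀ where (1 + γM₀^{l-1})^{|m-2|} ≤ 2. Then |‖x+h‖^m - ‖x‖^m - m‖x‖^{m-2}<x,h>| ≤ m(1 + |m-2|)·‖h‖²·‖x‖^{m-2}. -/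
/-!
With `a = ‖x‖` and `b = ‖x + h‖`, polarization gives `⟪x, h⟫ = (b² - a² - ‖h‖²) / 2`, so the
quantity to bound is `b^m - a^m - (m/2) a^(m-2) (b² - a²) + (m/2) a^(m-2) ‖h‖²`. By homogeneity
the first part is `a^m ψ(b/a)` with `ψ(v) = v^m - 1 - (m/2)(v² - 1)`. Since `ψ(1) = 0` and
`|ψ'(t)| = m |t^(m-1) - t| ≤ m (1 + 2|m-2|) |t - 1|` whenever `t^|m-2| ≤ 2`, which holds for
`t` between `1` and `b/a ≤ 1 + γ M₀^(l-1)`, integrating gives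
`|ψ(v)| ≤ m (1 + 2|m-2|) (v - 1)² / 2`, and `a² (b/a - 1)² = (b - a)² ≤ ‖h‖²`. Working with `ψ'`
instead of the Hessian of `‖y‖^m` avoids its singularity at `0` when `m < 2`.
-/

open RealInnerProductSpace Set

theorem abs_sub_le_of_abs_deriv_le_of_le {f f' : ℝ → ℝ} {a b K : ℝ} (hab : a ≤ b)
    (hf : ∀ t ∈ Icc a b, HasDerivAt f (f' t) t) (hf' : ∀ t ∈ Ioo a b, |f' t| ≤ K * (t - a)) :
    |f b - f a| ≤ K / 2 * (b - a) ^ 2 := by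
  suffices key : ∀ σ : ℝ, |σ| ≤ 1 → σ * (f b - f a) ≤ K / 2 * (b - a) ^ 2 by
    rw [abs_le]
    constructor
    · linarith [key (-1) (by norm_num)]
    · linarith [key 1 (by norm_num)]
  intro σ hσ
  have hg : ∀ t ∈ Icc a b,
      HasDerivAt (fun s => K / 2 * (s - a) ^ 2 - σ * f s) (K * (t - a) - σ * f' t) t := by
    intro t ht
    refine ((((hasDerivAt_id' t).sub_const a).pow 2).const_mul (K / 2)).sub
      ((hf t ht).const_mul σ) |>.congr_deriv ?_
    ring
  have hmono : MonotoneOn (fun s => K / 2 * (s - a) ^ 2 - σ * f s) (Icc a b) := by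
    refine monotoneOn_of_hasDerivWithinAt_nonneg (convex_Icc a b)
      (fun t ht => (hg t ht).continuousAt.continuousWithinAt)
      (fun t ht => (hg t (interior_subset ht)).hasDerivWithinAt) (fun t ht => ?_)
    rw [interior_Icc] at ht
    have : σ * f' t ≤ |f' t| := by
      calc σ * f' t ≤ |σ * f' t| := le_abs_self _
        _ = |σ| * |f' t| := abs_mul _ _
        _ ≤ |f' t| := mul_le_of_le_one_left (abs_nonneg _) hσ
    linarith [hf' t ht]
  have := hmono (left_mem_Icc.2 hab) (right_mem_Icc.2 hab) hab
  simp only [sub_self] at this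
  linarith

theorem abs_sub_le_of_abs_deriv_le {f f' : ℝ → ℝ} {a b K : ℝ}
    (hf : ∀ t ∈ uIcc a b, HasDerivAt f (f' t) t) (hf' : ∀ t ∈ uIoo a b, |f' t| ≤ K * |t - a|) :
    |f b - f a| ≤ K / 2 * (b - a) ^ 2 := by
  rcases le_total a b with hab | hba
  · refine abs_sub_le_of_abs_deriv_le_of_le hab (fun t ht => hf t ?_) (fun t ht => ?_)
    · rwa [uIcc_of_le hab]
    · rw [← abs_of_nonneg (sub_nonneg.2 ht.1.le)]
      exact hf' t (Ioo_subset_uIoo ht)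
  · have h := abs_sub_le_of_abs_deriv_le_of_le (f := fun t => f (-t)) (f' := fun t => -f' (-t))
      (K := K) (neg_le_neg hba) (fun t ht => ?_) (fun t ht => ?_)
    · simpa [abs_sub_comm, sub_eq_add_neg, add_comm, sq_abs, ← neg_sq (b + -a)] using h
    · have hmem : -t ∈ uIcc a b := by
        rw [uIcc_of_ge hba]; exact ⟨by linarith [ht.2], by linarith [ht.1]⟩
      exact ((hf (-t) hmem).comp t (hasDerivAt_neg t)).congr_deriv (by ring)
    · have hmem : -t ∈ uIoo a b := mem_uIoo_of_gt (by linarith [ht.2]) (by linarith [ht.1])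
      rw [abs_neg, ← abs_of_nonneg (by linarith [ht.1] : 0 ≤ t - -a), ← abs_neg (t - -a)]
      convert hf' (-t) hmem using 3
      ring

theorem rpow_le_max_one_rpow_of_mem_uIcc {e t u : ℝ} (he : 0 ≤ e) (ht : 0 ≤ t)
    (hu : u ∈ uIcc 1 t) : u ^ e ≤ max 1 (t ^ e) := by
  have hu0 : 0 ≤ u := le_trans (le_min zero_le_one ht) hu.1
  calc u ^ e ≤ (max 1 t) ^ e := Real.rpow_le_rpow hu0 hu.2 he
    _ = max 1 (t ^ e) := by
      rcases le_total t 1 with ht1 | ht1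
      · rw [max_eq_left ht1, Real.one_rpow, max_eq_left (Real.rpow_le_one ht ht1 he)]
      · rw [max_eq_right ht1, max_eq_right (Real.one_le_rpow ht1 he)]

theorem abs_rpow_sub_self_le_of_forall_mem_uIcc {p t : ℝ} (hp : 0 ≤ p) (ht : 0 < t)
    (hderiv : ∀ u ∈ uIcc 1 t, p * u ^ (p - 1) ≤ 2 * (1 + |p - 1|)) :
    |t ^ p - t| ≤ (1 + 2 * |p - 1|) * |t - 1| := by
  have hpos : ∀ u ∈ uIcc 1 t, 0 < u := fun u hu => lt_of_lt_of_le (lt_min one_pos ht) hu.1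
  have hf : ∀ u ∈ uIcc 1 t, HasDerivWithinAt (fun s : ℝ => s ^ p - s) (p * u ^ (p - 1) - 1)
      (uIcc 1 t) u := fun u hu =>
    ((Real.hasDerivAt_rpow_const (Or.inl (hpos u hu).ne')).sub (hasDerivAt_id' u)).hasDerivWithinAt
  have hbound : ∀ u ∈ uIcc 1 t, ‖p * u ^ (p - 1) - 1‖ ≤ 1 + 2 * |p - 1| := by
    intro u hu
    have h0 : 0 ≤ p * u ^ (p - 1) := mul_nonneg hp (Real.rpow_nonneg (hpos u hu).le _)
    rw [Real.norm_eq_abs, abs_le]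
    constructor <;> linarith [hderiv u hu, abs_nonneg (p - 1)]
  simpa using Convex.norm_image_sub_le_of_norm_hasDerivWithin_le hf hbound (convex_uIcc 1 t)
    left_mem_uIcc right_mem_uIcc

theorem abs_rpow_sub_self_le {p t : ℝ} (hp : 0 ≤ p) (ht : 0 < t) (ht2 : t ^ |p - 1| ≤ 2) :
    |t ^ p - t| ≤ (1 + 2 * |p - 1|) * |t - 1| := by
  rcases le_total p 1 with hp1 | hp1
  · rcases le_total t 1 with ht1 | ht1
    · -- the derivative is unbounded near `0` here, but `t ≤ t ^ p ≤ 1`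
      have hlow : t ≤ t ^ p := by
        simpa using Real.rpow_le_rpow_of_exponent_ge ht ht1 hp1
      have hup : t ^ p ≤ 1 := Real.rpow_le_one ht.le ht1 hp
      rw [abs_of_nonneg (sub_nonneg.2 hlow), abs_of_nonpos (sub_nonpos.2 ht1)]
      nlinarith [abs_nonneg (p - 1)]
    · refine abs_rpow_sub_self_le_of_forall_mem_uIcc hp ht fun u hu => ?_
      rw [uIcc_of_le ht1] at hu
      have : u ^ (p - 1) ≤ 1 := Real.rpow_le_one_of_one_le_of_nonpos hu.1 (by linarith)
      nlinarith [abs_nonneg (p - 1)]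
  · refine abs_rpow_sub_self_le_of_forall_mem_uIcc hp ht fun u hu => ?_
    rw [abs_of_nonneg (sub_nonneg.2 hp1)] at ht2 ⊢
    have : u ^ (p - 1) ≤ 2 :=
      (rpow_le_max_one_rpow_of_mem_uIcc (sub_nonneg.2 hp1) ht.le hu).trans (max_le one_le_two ht2)
    nlinarith

theorem abs_rpow_sub_one_sub_le {m v : ℝ} (hm : 1 ≤ m) (hv : 0 ≤ v) (hv2 : v ^ |m - 2| ≤ 2) :
    |v ^ m - 1 - m / 2 * (v ^ 2 - 1)| ≤ m * (1 + 2 * |m - 2|) / 2 * (v - 1) ^ 2 := by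
  have hf : ∀ t ∈ uIcc 1 v, HasDerivAt (fun s : ℝ => s ^ m - m / 2 * s ^ 2)
      (m * (t ^ (m - 1) - t)) t := fun t _ =>
    ((Real.hasDerivAt_rpow_const (Or.inr hm)).sub
      ((hasDerivAt_pow 2 t).const_mul (m / 2))).congr_deriv (by push_cast; ring)
  have hf' : ∀ t ∈ uIoo 1 v, |m * (t ^ (m - 1) - t)| ≤ m * (1 + 2 * |m - 2|) * |t - 1| := by
    intro t ht
    have ht0 : 0 < t := lt_of_le_of_lt (le_min zero_le_one hv) ht.1
    have ht2 : t ^ |m - 2| ≤ 2 :=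
      (rpow_le_max_one_rpow_of_mem_uIcc (abs_nonneg _) hv (uIoo_subset_uIcc_self ht)).trans
        (max_le one_le_two hv2)
    have h := abs_rpow_sub_self_le (p := m - 1) (by linarith) ht0
      (by rwa [sub_sub, one_add_one_eq_two])
    rw [sub_sub, one_add_one_eq_two] at h
    rw [abs_mul, abs_of_nonneg (by linarith : (0 : ℝ) ≤ m), mul_assoc]
    exact mul_le_mul_of_nonneg_left h (by linarith)
  have h := abs_sub_le_of_abs_deriv_le hf hf'
  rw [Real.one_rpow] at h
  convert h using 2
  ring

theorem abs_rpow_sub_rpow_sub_le {m a b : ℝ} (hm : 1 ≤ m) (ha : 0 < a) (hb : 0 ≤ b)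
    (hba : (b / a) ^ |m - 2| ≤ 2) :
    |b ^ m - a ^ m - m / 2 * a ^ (m - 2) * (b ^ 2 - a ^ 2)| ≤
      m * (1 + 2 * |m - 2|) / 2 * a ^ (m - 2) * (b - a) ^ 2 := by
  set v := b / a
  have hb_eq : b = a * v := by simp only [v]; field_simp
  have ham : a ^ m = a ^ (m - 2) * a ^ 2 := by
    rw [← Real.rpow_natCast, ← Real.rpow_add ha]; norm_num
  have hbm : b ^ m = a ^ m * v ^ m := by rw [hb_eq, Real.mul_rpow ha.le (by positivity)]
  have hdiff : b ^ m - a ^ m - m / 2 * a ^ (m - 2) * (b ^ 2 - a ^ 2) =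
      a ^ (m - 2) * a ^ 2 * (v ^ m - 1 - m / 2 * (v ^ 2 - 1)) := by
    rw [hbm, ham, hb_eq]; ring
  have hsq : (b - a) ^ 2 = a ^ 2 * (v - 1) ^ 2 := by rw [hb_eq]; ring
  have hpos : 0 < a ^ (m - 2) * a ^ 2 := by positivity
  rw [hdiff, hsq, abs_mul, abs_of_pos hpos]
  calc a ^ (m - 2) * a ^ 2 * |v ^ m - 1 - m / 2 * (v ^ 2 - 1)|
      ≤ a ^ (m - 2) * a ^ 2 * (m * (1 + 2 * |m - 2|) / 2 * (v - 1) ^ 2) :=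
        mul_le_mul_of_nonneg_left (abs_rpow_sub_one_sub_le hm (by positivity) hba) hpos.le
    _ = _ := by ring

theorem abs_norm_add_rpow_sub_le {E : Type*} [NormedAddCommGroup E] [InnerProductSpace ℝ E]
    {m δ : ℝ} (hm : 1 ≤ m) (hδ : (1 + δ) ^ |m - 2| ≤ 2) {x h : E} (hx : x ≠ 0)
    (hh : ‖h‖ ≤ δ * ‖x‖) :
    |‖x + h‖ ^ m - ‖x‖ ^ m - m * ‖x‖ ^ (m - 2) * ⟪x, h⟫| ≤
      m * (1 + |m - 2|) * ‖h‖ ^ 2 * ‖x‖ ^ (m - 2) := by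
  have hx0 : 0 < ‖x‖ := norm_pos_iff.2 hx
  have hratio : (‖x + h‖ / ‖x‖) ^ |m - 2| ≤ 2 := by
    refine le_trans (Real.rpow_le_rpow (by positivity) ?_ (abs_nonneg _)) hδ
    rw [div_le_iff₀ hx0]
    linarith [norm_add_le x h]
  have hinner : ⟪x, h⟫ = (‖x + h‖ ^ 2 - ‖x‖ ^ 2 - ‖h‖ ^ 2) / 2 := by
    rw [real_inner_eq_norm_add_mul_self_sub_norm_mul_self_sub_norm_mul_self_div_two]; ring
  have hsq : (‖x + h‖ - ‖x‖) ^ 2 ≤ ‖h‖ ^ 2 := by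
    have h1 : |‖x + h‖ - ‖x‖| ≤ ‖h‖ := by simpa using abs_norm_sub_norm_le (x + h) x
    simpa only [sq_abs] using pow_le_pow_left₀ (abs_nonneg _) h1 2
  have hmain := abs_rpow_sub_rpow_sub_le hm hx0 (norm_nonneg _) hratio
  have hm0 : 0 ≤ m := by linarith
  have hrest : 0 ≤ m / 2 * ‖x‖ ^ (m - 2) * ‖h‖ ^ 2 := by positivity
  rw [hinner]
  calc _ = |(‖x + h‖ ^ m - ‖x‖ ^ m - m / 2 * ‖x‖ ^ (m - 2) * (‖x + h‖ ^ 2 - ‖x‖ ^ 2))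
        + m / 2 * ‖x‖ ^ (m - 2) * ‖h‖ ^ 2| := by ring_nf
    _ ≤ m * (1 + 2 * |m - 2|) / 2 * ‖x‖ ^ (m - 2) * (‖x + h‖ - ‖x‖) ^ 2
        + m / 2 * ‖x‖ ^ (m - 2) * ‖h‖ ^ 2 :=
      (abs_add_le _ _).trans (add_le_add hmain (abs_of_nonneg hrest).le)
    _ ≤ m * (1 + 2 * |m - 2|) / 2 * ‖x‖ ^ (m - 2) * ‖h‖ ^ 2
        + m / 2 * ‖x‖ ^ (m - 2) * ‖h‖ ^ 2 := by gcongr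
    _ = m * (1 + |m - 2|) * ‖h‖ ^ 2 * ‖x‖ ^ (m - 2) := by ring

theorem stmt18_general (d : ℕ) (m γ l M₀ : ℝ)
    (hm : 1 ≤ m) (hγ : 0 < γ) (hl : l < 1) (hM₀ : 0 < M₀)
    (hM₀cond : (1 + γ * M₀ ^ (l - 1)) ^ |m - 2| ≤ 2)
    (x h : EuclideanSpace ℝ (Fin d))
    (hh : ‖h‖ ≤ γ * ‖x‖ ^ l) (hx : M₀ ≤ ‖x‖) :
    |‖x + h‖ ^ m - ‖x‖ ^ m - m * ‖x‖ ^ (m - 2) * ⟪x, h⟫| ≤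
      m * (1 + |m - 2|) * ‖h‖ ^ 2 * ‖x‖ ^ (m - 2) := by
  have hx0 : 0 < ‖x‖ := hM₀.trans_le hx
  refine abs_norm_add_rpow_sub_le hm hM₀cond (norm_pos_iff.1 hx0) ?_
  calc ‖h‖ ≤ γ * ‖x‖ ^ l := hh
    _ = γ * ‖x‖ ^ (l - 1) * ‖x‖ := by
      rw [mul_assoc, ← Real.rpow_add_one hx0.ne']; ring_nf
    _ ≤ γ * M₀ ^ (l - 1) * ‖x‖ := by
      have := Real.rpow_le_rpow_of_nonpos hM₀ hx (by linarith : l - 1 ≤ 0)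
      gcongr

/-- Second-order Taylor bound for y ↦ ‖y‖^m (m ≥ 1): if
‖h‖ ≤ γ‖x‖^l with l < 1 and ‖x‖ ≥ M₀ where (1 + γM₀^{l-1})^{|m-2|} ≤ 2, then
|‖x+h‖^m - ‖x‖^m - m‖x‖^{m-2}⟨x,h⟩| ≤ m(1 + |m-2|)·‖h‖²·‖x‖^{m-2}. -/
theorem stmt18 (d : ℕ) (hd : 1 ≤ d) (m γ l M₀ : ℝ)
    (hm : 1 ≤ m) (hγ : 0 < γ) (hl : l < 1) (hM₀ : 0 < M₀)
    (hM₀cond : (1 + γ * M₀ ^ (l - 1)) ^ |m - 2| ≤ 2)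
    (x h : EuclideanSpace ℝ (Fin d))
    (hh : ‖h‖ ≤ γ * ‖x‖ ^ l) (hx : M₀ ≤ ‖x‖) :
    |‖x + h‖ ^ m - ‖x‖ ^ m - m * ‖x‖ ^ (m - 2) * ⟪x, h⟫| ≤
      m * (1 + |m - 2|) * ‖h‖ ^ 2 * ‖x‖ ^ (m - 2) :=
  stmt18_general d m γ l M₀ hm hγ hl hM₀ hM₀cond x h hh hx
end

section
/- Let m ≥ 1, l < 1, γ > 0 and x, u with ‖c₁‖ ≤ γ‖x‖^l‖u‖, ‖u‖ > 1, and ‖x‖ ≥ M₀ where (1 + γM₀^{l-1})^{m-1} ≤ 2. For any vector x(u) with ‖x(u)‖ ≤ ‖x‖, one has ‖x(u) + c₁‖^m - ‖x(u)‖^m ≤ 2m·γ·‖x‖^{m-1+l}·‖u‖^m. -/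
/-!
The mean-value bound for `t ↦ t ^ m` (a consequence of its convexity) gives
`‖xu + c₁‖ ^ m - ‖xu‖ ^ m ≤ m (‖xu‖ + ‖c₁‖) ^ (m - 1) ‖c₁‖`. Since `‖u‖ > 1` and `‖x‖ ≥ M₀`,
`‖xu‖ + ‖c₁‖ ≤ ‖u‖ ‖x‖ (1 + γ M₀ ^ (l - 1))`, and the choice of `M₀` makes the last factor,
raised to the power `m - 1`, at most `2`.
-/

open Real

lemma Real.rpow_sub_rpow_le_mul_sub {m a b : ℝ} (hm : 1 ≤ m) (hb : 0 ≤ b) (hba : b ≤ a) :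
    a ^ m - b ^ m ≤ m * a ^ (m - 1) * (a - b) := by
  rcases hba.eq_or_lt with rfl | hlt
  · simp
  have hslope := (convexOn_rpow hm).slope_le_of_hasDerivAt hb (hb.trans hba) hlt
    (hasDerivAt_rpow_const (Or.inr hm))
  rwa [slope_def_field, div_le_iff₀ (sub_pos.2 hlt)] at hslope

lemma norm_add_rpow_sub_rpow_le {E : Type*} [SeminormedAddCommGroup E] {m : ℝ} (hm : 1 ≤ m)
    (y h : E) : ‖y + h‖ ^ m - ‖y‖ ^ m ≤ m * (‖y‖ + ‖h‖) ^ (m - 1) * ‖h‖ := by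
  rcases le_total ‖y + h‖ ‖y‖ with hle | hle
  · have : ‖y + h‖ ^ m ≤ ‖y‖ ^ m := by gcongr
    have : 0 ≤ m * (‖y‖ + ‖h‖) ^ (m - 1) * ‖h‖ := by positivity
    linarith
  calc ‖y + h‖ ^ m - ‖y‖ ^ m ≤ m * ‖y + h‖ ^ (m - 1) * (‖y + h‖ - ‖y‖) :=
        rpow_sub_rpow_le_mul_sub hm (norm_nonneg y) hle
    _ ≤ m * (‖y‖ + ‖h‖) ^ (m - 1) * ‖h‖ := by
        have : ‖y + h‖ - ‖y‖ ≤ ‖h‖ := by linarith [norm_add_le y h]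
        gcongr
        exact norm_add_le y h

lemma add_mul_rpow_mul_le_mul_one_add {r s γ l M₀ : ℝ} (hM₀ : 0 < M₀) (hr : M₀ ≤ r)
    (hs : 1 ≤ s) (hγ : 0 ≤ γ) (hl : l ≤ 1) :
    r + γ * r ^ l * s ≤ s * r * (1 + γ * M₀ ^ (l - 1)) := by
  have hr₀ : 0 < r := hM₀.trans_le hr
  have hdecay : r ^ (l - 1) ≤ M₀ ^ (l - 1) := rpow_le_rpow_of_nonpos hM₀ hr (by linarith)
  calc r + γ * r ^ l * s ≤ s * (r + γ * r ^ l) := by nlinarith [rpow_pos_of_pos hr₀ l]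
    _ = s * r * (1 + γ * r ^ (l - 1)) := by
        rw [rpow_sub_one hr₀.ne']; field_simp
    _ ≤ s * r * (1 + γ * M₀ ^ (l - 1)) := by gcongr

theorem stmt19_general (d q : ℕ) (m γ l M₀ : ℝ)
    (hm : 1 ≤ m) (hγ : 0 < γ) (hl : l < 1) (hM₀ : 0 < M₀)
    (hM₀cond : (1 + γ * M₀ ^ (l - 1)) ^ (m - 1) ≤ 2)
    (x xu c₁ : EuclideanSpace ℝ (Fin d)) (u : EuclideanSpace ℝ (Fin q))
    (hc₁ : ‖c₁‖ ≤ γ * ‖x‖ ^ l * ‖u‖) (hu : 1 < ‖u‖)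
    (hx : M₀ ≤ ‖x‖) (hxu : ‖xu‖ ≤ ‖x‖) :
    ‖xu + c₁‖ ^ m - ‖xu‖ ^ m ≤ 2 * m * γ * ‖x‖ ^ (m - 1 + l) * ‖u‖ ^ m := by
  have hx₀ : 0 < ‖x‖ := hM₀.trans_le hx
  have hu₀ : 0 < ‖u‖ := one_pos.trans hu
  have hsum : ‖xu‖ + ‖c₁‖ ≤ ‖u‖ * ‖x‖ * (1 + γ * M₀ ^ (l - 1)) := by
    linarith [add_mul_rpow_mul_le_mul_one_add hM₀ hx hu.le hγ.le hl.le]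
  have hsum_pow : (‖xu‖ + ‖c₁‖) ^ (m - 1) ≤ 2 * (‖u‖ * ‖x‖) ^ (m - 1) := calc
    (‖xu‖ + ‖c₁‖) ^ (m - 1) ≤ (‖u‖ * ‖x‖ * (1 + γ * M₀ ^ (l - 1))) ^ (m - 1) := by gcongr
    _ = (‖u‖ * ‖x‖) ^ (m - 1) * (1 + γ * M₀ ^ (l - 1)) ^ (m - 1) :=
        mul_rpow (by positivity) (by positivity)
    _ ≤ 2 * (‖u‖ * ‖x‖) ^ (m - 1) := by rw [mul_comm 2]; gcongr
  calc ‖xu + c₁‖ ^ m - ‖xu‖ ^ m ≤ m * (‖xu‖ + ‖c₁‖) ^ (m - 1) * ‖c₁‖ :=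
        norm_add_rpow_sub_rpow_le hm xu c₁
    _ ≤ m * (2 * (‖u‖ * ‖x‖) ^ (m - 1)) * (γ * ‖x‖ ^ l * ‖u‖) := by gcongr
    _ = 2 * m * γ * ‖x‖ ^ (m - 1 + l) * ‖u‖ ^ m := by
        rw [mul_rpow hu₀.le hx₀.le, rpow_add hx₀, rpow_sub_one hu₀.ne']
        field_simp

/-- Mean-value bound for y ↦ ‖y‖^m, m ≥ 1: if
‖c₁‖ ≤ γ‖x‖^l‖u‖ with ‖u‖ > 1, l < 1, and ‖x‖ ≥ M₀ with
(1 + γM₀^{l-1})^{m-1} ≤ 2, then for any x(u) with ‖x(u)‖ ≤ ‖x‖ one has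
‖x(u) + c₁‖^m - ‖x(u)‖^m ≤ 2mγ‖x‖^{m-1+l}‖u‖^m. -/
theorem stmt19 (d q : ℕ) (hd : 1 ≤ d) (hq : 1 ≤ q) (m γ l M₀ : ℝ)
    (hm : 1 ≤ m) (hγ : 0 < γ) (hl : l < 1) (hM₀ : 0 < M₀)
    (hM₀cond : (1 + γ * M₀ ^ (l - 1)) ^ (m - 1) ≤ 2)
    (x xu c₁ : EuclideanSpace ℝ (Fin d)) (u : EuclideanSpace ℝ (Fin q))
    (hc₁ : ‖c₁‖ ≤ γ * ‖x‖ ^ l * ‖u‖) (hu : 1 < ‖u‖)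
    (hx : M₀ ≤ ‖x‖) (hxu : ‖xu‖ ≤ ‖x‖) :
    ‖xu + c₁‖ ^ m - ‖xu‖ ^ m ≤ 2 * m * γ * ‖x‖ ^ (m - 1 + l) * ‖u‖ ^ m :=
  stmt19_general d q m γ l M₀ hm hγ hl hM₀ hM₀cond x xu c₁ u hc₁ hu hx hxu
end
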